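/- The map φ takes values in NS(Syz F) and is a bijection from LT(I) onto NS(Syz F). Moreover, its inverse is given explicitly by φ⁻¹(σ) = min{t ∈ 𝕋ⁿ : there exists f ∈ I \ {0} with LT(f) = t and S(f) = σ} for every σ ∈ NS(Syz F), the minimum being taken with respect to μ (which is a well-order on 𝕋ⁿ since it is admissible). -/

import Mathlib

open MvPolynomial

namespace F5

noncomputable section
open scoped Classical

/-- Monomials (power products) in `n` variables, represented by exponent vectors. -/
abbrev Mon (n : ℕ) : Type := Fin n →₀ ℕ

/-- Module terms `t·eₗ` of the free module `Pᵐ`. -/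
abbrev MTerm (n m : ℕ) : Type := (Fin n →₀ ℕ) × Fin m

/-- Action of a monomial on a module term: `u • (t eₗ) = (u t) eₗ`. -/
def mact {n m : ℕ} (u : Mon n) (σ : MTerm n m) : MTerm n m := (u + σ.1, σ.2)

/-- An admissible order on monomials: a linear order with `1 ≤ t` and
compatibility with multiplication. -/
structure AdmissibleOrder (n : ℕ) where
  ord : LinearOrder (Mon n)
  one_le : ∀ t : Mon n, ord.le 0 t
  mul_lt_mul : ∀ s t u : Mon n, ord.lt s t → ord.lt (u + s) (u + t)

/-- An admissible module order on module terms: a linear well-order compatible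
with the monomial action, and such that `σ ≤ u σ`. -/
structure ModuleOrder (n m : ℕ) where
  ord : LinearOrder (MTerm n m)
  wf : WellFounded ord.lt
  mul_lt_mul : ∀ (σ τ : MTerm n m) (u : Mon n), ord.lt σ τ → ord.lt (mact u σ) (mact u τ)
  le_mul : ∀ (σ : MTerm n m) (u : Mon n), ord.le σ (mact u σ)

variable {k : Type*} [Field k] {n m : ℕ}

/-- The leading monomial of a polynomial with respect to `μ` (junk value `0` for `f = 0`). -/
noncomputable def pLT (μ : AdmissibleOrder n) (f : MvPolynomial (Fin n) k) : Mon n :=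
  if h : f.support.Nonempty then @Finset.max' _ μ.ord f.support h else 0

/-- The leading coefficient of a polynomial with respect to `μ`. -/
noncomputable def pLC (μ : AdmissibleOrder n) (f : MvPolynomial (Fin n) k) : k :=
  f.coeff (pLT μ f)

/-- The set (finset) of module terms occurring in an element of `Pᵐ`. -/
noncomputable def msupport (u : Fin m → MvPolynomial (Fin n) k) : Finset (MTerm n m) :=
  letI := Classical.decEq (MTerm n m)
  Finset.univ.biUnion fun l => (u l).support.image fun t => (t, l)

/-- A junk default module term (needs `m ≠ 0`). -/
def mdefault [NeZero m] : MTerm n m := (0, ⟨0, Nat.pos_of_ne_zero (NeZero.ne m)⟩)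

/-- The leading module term of a nonzero element of `Pᵐ` with respect to `μ'`
(junk value for `0`). -/
noncomputable def mLT [NeZero m] (μ' : ModuleOrder n m) (u : Fin m → MvPolynomial (Fin n) k) :
    MTerm n m :=
  if h : (msupport u).Nonempty then @Finset.max' _ μ'.ord _ h else mdefault

/-- The map `v : Pᵐ → P`, `v(eᵢ) = fᵢ`. -/
noncomputable def vmap (F : Fin m → MvPolynomial (Fin n) k)
    (u : Fin m → MvPolynomial (Fin n) k) : MvPolynomial (Fin n) k :=
  ∑ i, u i * F i

/-- The ideal `I = (f₁, …, fₘ)`. -/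
noncomputable def idealI (F : Fin m → MvPolynomial (Fin n) k) : Ideal (MvPolynomial (Fin n) k) :=
  Ideal.span (Set.range F)

/-- `LT(Syz F)`: leading module terms of nonzero syzygies of `F`. -/
def LTSyz [NeZero m] (μ' : ModuleOrder n m) (F : Fin m → MvPolynomial (Fin n) k) :
    Set (MTerm n m) :=
  {σ | ∃ s : Fin m → MvPolynomial (Fin n) k, s ≠ 0 ∧ vmap F s = 0 ∧ mLT μ' s = σ}

/-- The signature `S(f)`: the `μ'`-minimum of `{LT(u) : v(u) = f}` (junk for `f = 0` or
`f ∉ I`). -/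
noncomputable def sig [NeZero m] (μ' : ModuleOrder n m) (F : Fin m → MvPolynomial (Fin n) k)
    (f : MvPolynomial (Fin n) k) : MTerm n m :=
  if hne : {σ : MTerm n m |
      ∃ u : Fin m → MvPolynomial (Fin n) k, u ≠ 0 ∧ vmap F u = f ∧ mLT μ' u = σ}.Nonempty
  then μ'.wf.min _ hne else mdefault

/-- `f` S-reduces to `g` with `h`, with respect to `σ`. -/
noncomputable def SReduces [NeZero m] (μ : AdmissibleOrder n) (μ' : ModuleOrder n m)
    (F : Fin m → MvPolynomial (Fin n) k)
    (f h g : MvPolynomial (Fin n) k) (σ : MTerm n m) : Prop :=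
  ∃ (t : Mon n) (α : k), α ≠ 0 ∧ g = f - (monomial t α) * h ∧
    (g = 0 ∨ μ.ord.lt (pLT μ g) (pLT μ f)) ∧
    μ'.ord.lt (sig μ' F ((monomial t (1 : k)) * h)) σ

/-- `f` is S-irreducible with respect to `σ`. -/
noncomputable def SIrr [NeZero m] (μ : AdmissibleOrder n) (μ' : ModuleOrder n m)
    (F : Fin m → MvPolynomial (Fin n) k) (f : MvPolynomial (Fin n) k) (σ : MTerm n m) : Prop :=
  f = 0 ∨ ¬ ∃ h : MvPolynomial (Fin n) k, h ∈ idealI F ∧ h ≠ 0 ∧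
    ∃ g : MvPolynomial (Fin n) k, SReduces μ μ' F f h g σ

/-- `G` is an S-Gröbner basis (of `I` w.r.t. `μ`, `F`, `μ'`). -/
noncomputable def IsSGB [NeZero m] (μ : AdmissibleOrder n) (μ' : ModuleOrder n m)
    (F : Fin m → MvPolynomial (Fin n) k) (G : Set (MvPolynomial (Fin n) k)) : Prop :=
  (∀ g ∈ G, g ∈ idealI F ∧ g ≠ 0) ∧
  ∀ f : MvPolynomial (Fin n) k, f ∈ idealI F → f ≠ 0 → SIrr μ μ' F f (sig μ' F f) →
    ∃ g ∈ G, ∃ t : Mon n,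
      pLT μ ((monomial t (1 : k)) * g) = pLT μ f ∧
      sig μ' F ((monomial t (1 : k)) * g) = sig μ' F f

/-- `LT(I)`: the set of leading monomials of nonzero elements of `I`. -/
def LTIdeal (μ : AdmissibleOrder n) (F : Fin m → MvPolynomial (Fin n) k) : Set (Mon n) :=
  {t | ∃ f : MvPolynomial (Fin n) k, f ∈ idealI F ∧ f ≠ 0 ∧ pLT μ f = t}

/-- `φ(t)`: the `μ'`-minimum signature of nonzero elements of `I` with leading monomial `t`. -/
noncomputable def phi [NeZero m] (μ : AdmissibleOrder n) (μ' : ModuleOrder n m)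
    (F : Fin m → MvPolynomial (Fin n) k) (t : Mon n) : MTerm n m :=
  if hne : {σ : MTerm n m | ∃ f : MvPolynomial (Fin n) k,
      f ∈ idealI F ∧ f ≠ 0 ∧ pLT μ f = t ∧ sig μ' F f = σ}.Nonempty
  then μ'.wf.min _ hne else mdefault

/-- `f` is a primitive S-irreducible polynomial. -/
noncomputable def PrimSIrr [NeZero m] (μ : AdmissibleOrder n) (μ' : ModuleOrder n m)
    (F : Fin m → MvPolynomial (Fin n) k) (f : MvPolynomial (Fin n) k) : Prop :=
  f ∈ idealI F ∧ f ≠ 0 ∧ SIrr μ μ' F f (sig μ' F f) ∧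
  ¬ ∃ (f' : MvPolynomial (Fin n) k) (t : Mon n),
      f' ∈ idealI F ∧ f' ≠ 0 ∧ t ≠ 0 ∧ SIrr μ μ' F f' (sig μ' F f') ∧
      pLT μ ((monomial t (1 : k)) * f') = pLT μ f ∧
      sig μ' F ((monomial t (1 : k)) * f') = sig μ' F f

/-- The lcm of two monomials (pointwise maximum of exponents). -/
def lcmMon {n : ℕ} (s t : Mon n) : Mon n := t + (s - t)

/-- The term `u₁ = lcm(LT g₁, LT g₂)/(LC g₁ · LT g₁)` (when the first argument is `g₁`). -/
noncomputable def uterm (μ : AdmissibleOrder n) (g₁ g₂ : MvPolynomial (Fin n) k) :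
    MvPolynomial (Fin n) k :=
  monomial (lcmMon (pLT μ g₁) (pLT μ g₂) - pLT μ g₁) (pLC μ g₁)⁻¹

/-- The S-polynomial of `g₁` and `g₂`. -/
noncomputable def Spol (μ : AdmissibleOrder n) (g₁ g₂ : MvPolynomial (Fin n) k) :
    MvPolynomial (Fin n) k :=
  uterm μ g₁ g₂ * g₁ - uterm μ g₂ g₁ * g₂

/-- `(g₁, g₂)` is a normal pair. -/
noncomputable def NormalPair [NeZero m] (μ : AdmissibleOrder n) (μ' : ModuleOrder n m)
    (F : Fin m → MvPolynomial (Fin n) k) (g₁ g₂ : MvPolynomial (Fin n) k) : Prop :=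
  PrimSIrr μ μ' F g₁ ∧ PrimSIrr μ μ' F g₂ ∧
  sig μ' F (uterm μ g₁ g₂ * g₁) =
    mact (lcmMon (pLT μ g₁) (pLT μ g₂) - pLT μ g₁) (sig μ' F g₁) ∧
  sig μ' F (uterm μ g₂ g₁ * g₂) =
    mact (lcmMon (pLT μ g₂) (pLT μ g₁) - pLT μ g₂) (sig μ' F g₂) ∧
  sig μ' F (uterm μ g₁ g₂ * g₁) ≠ sig μ' F (uterm μ g₂ g₁ * g₂)


end
end F5

open F5 MvPolynomial

/-!
Two kinds of cancellation drive the argument. For leading terms (in `P` and in `Pᵐ` alike): a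
scalar combination of two elements with the same leading term can kill it, while subtracting any
multiple of an element with smaller leading term keeps it. For signatures: `S(f)` is never the
leading term of a syzygy (subtract the syzygy from a minimal representation of `f`), every
`σ ∈ NS(Syz F)` is attained (by `v(σ)`), subtracting a multiple of `g` with `S(g) < S(f)` keeps
the signature `S(f)`, and two elements of equal signature combine to one of smaller signature.

Injectivity: if `t₁ < t₂` had `φ(t₁) = φ(t₂)`, combining witnesses would give an element with
leading monomial `t₂` and signature below `φ(t₂)`. Surjectivity and the inverse: take `f₀` of
signature `σ` with `μ`-least leading monomial; a witness `f'` of `φ(LT f₀) < σ` would give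
`f₀ - c f'` of signature `σ` with smaller leading monomial.
-/

namespace F5

variable {k : Type*} [Field k] {n m : ℕ}

section LeadingMonomial

variable (μ : AdmissibleOrder n)

theorem AdmissibleOrder.ord_le_of_le {s t : Mon n} (h : s ≤ t) : μ.ord.le s t := by
  obtain ⟨d, rfl⟩ := le_iff_exists_add.1 h
  rcases (@le_iff_eq_or_lt _ μ.ord.toPartialOrder _ _).1 (μ.one_le d) with h0 | h0
  · rw [← h0, add_zero]
    exact @le_refl _ μ.ord.toPreorder s
  · simpa using @le_of_lt _ μ.ord.toPreorder _ _ (μ.mul_lt_mul 0 d s h0)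

/-- Dickson's lemma: an infinite descending chain `g` would contain `i < j` with `g i ∣ g j`. -/
theorem AdmissibleOrder.wellFounded : WellFounded μ.ord.lt := by
  rw [RelEmbedding.wellFounded_iff_isEmpty]
  refine ⟨fun g => ?_⟩
  obtain ⟨i, j, hij, hle⟩ := wellQuasiOrdered_le (α := Mon n) (fun i => g i)
  exact (@not_lt _ μ.ord _ _).2 (μ.ord_le_of_le hle) (g.map_rel_iff.2 hij)

variable {μ}

theorem pLT_mem_support {f : MvPolynomial (Fin n) k} (hf : f ≠ 0) : pLT μ f ∈ f.support := by
  rw [pLT, dif_pos (support_nonempty.2 hf)]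
  exact @Finset.max'_mem _ μ.ord _ _

theorem le_pLT {f : MvPolynomial (Fin n) k} {t : Mon n} (ht : t ∈ f.support) :
    μ.ord.le t (pLT μ f) := by
  rw [pLT, dif_pos ⟨t, ht⟩]
  exact @Finset.le_max' _ μ.ord _ _ ht

theorem pLT_le_iff {f : MvPolynomial (Fin n) k} (hf : f ≠ 0) {t : Mon n} :
    μ.ord.le (pLT μ f) t ↔ ∀ s ∈ f.support, μ.ord.le s t := by
  rw [pLT, dif_pos (support_nonempty.2 hf)]
  exact @Finset.max'_le_iff _ μ.ord _ _ _

theorem pLT_lt_iff {f : MvPolynomial (Fin n) k} (hf : f ≠ 0) {t : Mon n} :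
    μ.ord.lt (pLT μ f) t ↔ ∀ s ∈ f.support, μ.ord.lt s t := by
  rw [pLT, dif_pos (support_nonempty.2 hf)]
  exact @Finset.max'_lt_iff _ μ.ord _ _ _

theorem pLC_ne_zero {f : MvPolynomial (Fin n) k} (hf : f ≠ 0) : pLC μ f ≠ 0 :=
  mem_support_iff.1 (pLT_mem_support hf)

theorem mem_support_or_of_mem_support_sub_smul {f g : MvPolynomial (Fin n) k} {c : k}
    {s : Mon n} (hs : s ∈ (f - c • g).support) : s ∈ f.support ∨ s ∈ g.support := by
  by_contra! h
  simp_all [mem_support_iff]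

theorem pLT_sub_smul_lt {f g : MvPolynomial (Fin n) k} (hg : g ≠ 0) (hfg : pLT μ f = pLT μ g)
    (hd : f - (pLC μ f / pLC μ g) • g ≠ 0) :
    μ.ord.lt (pLT μ (f - (pLC μ f / pLC μ g) • g)) (pLT μ f) := by
  refine (pLT_lt_iff hd).2 fun s hs => @lt_of_le_of_ne _ μ.ord.toPartialOrder _ _ ?_ fun hst => ?_
  · rcases mem_support_or_of_mem_support_sub_smul hs with h | h
    · exact le_pLT h
    · exact hfg ▸ le_pLT h
  · have hgf : g.coeff (pLT μ f) = pLC μ g := by rw [hfg]; rfl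
    rw [hst, mem_support_iff, coeff_sub, coeff_smul, smul_eq_mul, hgf,
      div_mul_cancel₀ _ (pLC_ne_zero hg)] at hs
    exact hs (sub_self _)

theorem pLT_sub_smul_of_lt {f g : MvPolynomial (Fin n) k} (hf : f ≠ 0)
    (hlt : μ.ord.lt (pLT μ g) (pLT μ f)) (c : k) :
    f - c • g ≠ 0 ∧ pLT μ (f - c • g) = pLT μ f := by
  have hg : g.coeff (pLT μ f) = 0 := by
    by_contra h
    exact (@not_lt _ μ.ord _ _).2 (le_pLT (mem_support_iff.2 h)) hlt
  have hmem : pLT μ f ∈ (f - c • g).support := by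
    rw [mem_support_iff, coeff_sub, coeff_smul, hg, smul_zero, sub_zero]
    exact pLC_ne_zero hf
  have hd : f - c • g ≠ 0 := support_nonempty.1 ⟨_, hmem⟩
  refine ⟨hd, @le_antisymm _ μ.ord.toPartialOrder _ _ ((pLT_le_iff hd).2 fun s hs => ?_)
    (le_pLT hmem)⟩
  rcases mem_support_or_of_mem_support_sub_smul hs with h | h
  · exact le_pLT h
  · exact @le_of_lt _ μ.ord.toPreorder _ _ (@lt_of_le_of_lt _ μ.ord.toPreorder _ _ _ (le_pLT h) hlt)

end LeadingMonomial

section ModuleLeadingTerm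

def mcoeff (σ : MTerm n m) (u : Fin m → MvPolynomial (Fin n) k) : k := (u σ.2).coeff σ.1

theorem mem_msupport {σ : MTerm n m} {u : Fin m → MvPolynomial (Fin n) k} :
    σ ∈ msupport u ↔ mcoeff σ u ≠ 0 := by
  simp only [msupport, Finset.mem_biUnion, Finset.mem_univ, true_and, Finset.mem_image,
    mem_support_iff, mcoeff]
  exact ⟨fun ⟨_, _, ht, h⟩ => h ▸ ht, fun h => ⟨σ.2, σ.1, h, rfl⟩⟩

theorem msupport_nonempty {u : Fin m → MvPolynomial (Fin n) k} :
    (msupport u).Nonempty ↔ u ≠ 0 := by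
  refine ⟨fun ⟨σ, hσ⟩ hu => mem_msupport.1 hσ (by simp [hu, mcoeff]), fun hu => ?_⟩
  obtain ⟨l, hl⟩ := Function.ne_iff.1 hu
  obtain ⟨t, ht⟩ := support_nonempty.2 hl
  exact ⟨(t, l), mem_msupport.2 (mem_support_iff.1 ht)⟩

theorem mcoeff_sub_smul (σ : MTerm n m) (u w : Fin m → MvPolynomial (Fin n) k) (c : k) :
    mcoeff σ (u - c • w) = mcoeff σ u - c * mcoeff σ w := by
  simp [mcoeff]

theorem mem_msupport_or_of_mem_msupport_sub_smul {u w : Fin m → MvPolynomial (Fin n) k}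
    {c : k} {σ : MTerm n m} (hσ : σ ∈ msupport (u - c • w)) :
    σ ∈ msupport u ∨ σ ∈ msupport w := by
  by_contra! h
  simp_all [mem_msupport, mcoeff_sub_smul]

theorem mem_msupport_single_iff {σ τ : MTerm n m} :
    τ ∈ msupport (Pi.single σ.2 (monomial σ.1 (1 : k))) ↔ τ = σ := by
  obtain ⟨t, l⟩ := σ
  obtain ⟨s, l'⟩ := τ
  by_cases hl : l' = l
  · subst hl
    simp [mem_msupport, mcoeff, coeff_monomial, eq_comm]
  · simp [mem_msupport, mcoeff, hl]

variable [NeZero m] {μ' : ModuleOrder n m}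

noncomputable def mLC (μ' : ModuleOrder n m) (u : Fin m → MvPolynomial (Fin n) k) : k :=
  mcoeff (mLT μ' u) u

theorem mLT_mem_msupport {u : Fin m → MvPolynomial (Fin n) k} (hu : u ≠ 0) :
    mLT μ' u ∈ msupport u := by
  rw [mLT, dif_pos (msupport_nonempty.2 hu)]
  exact @Finset.max'_mem _ μ'.ord _ _

theorem le_mLT {u : Fin m → MvPolynomial (Fin n) k} {σ : MTerm n m} (hσ : σ ∈ msupport u) :
    μ'.ord.le σ (mLT μ' u) := by
  rw [mLT, dif_pos ⟨σ, hσ⟩]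
  exact @Finset.le_max' _ μ'.ord _ _ hσ

theorem mLT_le_iff {u : Fin m → MvPolynomial (Fin n) k} (hu : u ≠ 0) {σ : MTerm n m} :
    μ'.ord.le (mLT μ' u) σ ↔ ∀ τ ∈ msupport u, μ'.ord.le τ σ := by
  rw [mLT, dif_pos (msupport_nonempty.2 hu)]
  exact @Finset.max'_le_iff _ μ'.ord _ _ _

theorem mLT_lt_iff {u : Fin m → MvPolynomial (Fin n) k} (hu : u ≠ 0) {σ : MTerm n m} :
    μ'.ord.lt (mLT μ' u) σ ↔ ∀ τ ∈ msupport u, μ'.ord.lt τ σ := by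
  rw [mLT, dif_pos (msupport_nonempty.2 hu)]
  exact @Finset.max'_lt_iff _ μ'.ord _ _ _

theorem mLC_ne_zero {u : Fin m → MvPolynomial (Fin n) k} (hu : u ≠ 0) : mLC μ' u ≠ 0 :=
  mem_msupport.1 (mLT_mem_msupport hu)

theorem mLT_sub_smul_lt {u w : Fin m → MvPolynomial (Fin n) k} (hw : w ≠ 0)
    (huw : mLT μ' u = mLT μ' w) (hd : u - (mLC μ' u / mLC μ' w) • w ≠ 0) :
    μ'.ord.lt (mLT μ' (u - (mLC μ' u / mLC μ' w) • w)) (mLT μ' u) := by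
  refine (mLT_lt_iff hd).2 fun τ hτ => @lt_of_le_of_ne _ μ'.ord.toPartialOrder _ _ ?_ fun hτu => ?_
  · rcases mem_msupport_or_of_mem_msupport_sub_smul hτ with h | h
    · exact le_mLT h
    · exact huw ▸ le_mLT h
  · have hwu : mcoeff (mLT μ' u) w = mLC μ' w := by rw [huw]; rfl
    rw [hτu, mem_msupport, mcoeff_sub_smul, hwu, div_mul_cancel₀ _ (mLC_ne_zero hw)] at hτ
    exact hτ (sub_self _)

theorem mLT_sub_smul_of_lt {u w : Fin m → MvPolynomial (Fin n) k} (hu : u ≠ 0)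
    (hlt : μ'.ord.lt (mLT μ' w) (mLT μ' u)) (c : k) :
    u - c • w ≠ 0 ∧ mLT μ' (u - c • w) = mLT μ' u := by
  have hw : mcoeff (mLT μ' u) w = 0 := by
    by_contra h
    exact (@not_lt _ μ'.ord _ _).2 (le_mLT (mem_msupport.2 h)) hlt
  have hmem : mLT μ' u ∈ msupport (u - c • w) := by
    rw [mem_msupport, mcoeff_sub_smul, hw, mul_zero, sub_zero]
    exact mLC_ne_zero hu
  have hd : u - c • w ≠ 0 := msupport_nonempty.1 ⟨_, hmem⟩
  refine ⟨hd, @le_antisymm _ μ'.ord.toPartialOrder _ _ ((mLT_le_iff hd).2 fun τ hτ => ?_)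
    (le_mLT hmem)⟩
  rcases mem_msupport_or_of_mem_msupport_sub_smul hτ with h | h
  · exact le_mLT h
  · exact @le_of_lt _ μ'.ord.toPreorder _ _
      (@lt_of_le_of_lt _ μ'.ord.toPreorder _ _ _ (le_mLT h) hlt)

theorem mLT_single (σ : MTerm n m) : mLT μ' (Pi.single σ.2 (monomial σ.1 (1 : k))) = σ :=
  mem_msupport_single_iff.1 <| mLT_mem_msupport <| by simp

end ModuleLeadingTerm

section Signature

theorem vmap_zero (F : Fin m → MvPolynomial (Fin n) k) : vmap F 0 = 0 := by
  simp [vmap]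

theorem vmap_sub_smul (F u w : Fin m → MvPolynomial (Fin n) k) (c : k) :
    vmap F (u - c • w) = vmap F u - c • vmap F w := by
  simp [vmap, sub_mul, Finset.sum_sub_distrib, Finset.smul_sum]

theorem vmap_mem_idealI (F u : Fin m → MvPolynomial (Fin n) k) : vmap F u ∈ idealI F :=
  Ideal.sum_mem _ fun i _ => Ideal.mul_mem_left _ _ (Ideal.subset_span ⟨i, rfl⟩)

variable [NeZero m] (μ' : ModuleOrder n m) (F : Fin m → MvPolynomial (Fin n) k)

theorem exists_mLT_eq_sig {f : MvPolynomial (Fin n) k} (hf : f ∈ idealI F) (hf0 : f ≠ 0) :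
    ∃ u, u ≠ 0 ∧ vmap F u = f ∧ mLT μ' u = sig μ' F f := by
  obtain ⟨u, hu⟩ := (Submodule.mem_span_range_iff_exists_fun _).1 hf
  have hne : {σ : MTerm n m |
      ∃ u : Fin m → MvPolynomial (Fin n) k, u ≠ 0 ∧ vmap F u = f ∧ mLT μ' u = σ}.Nonempty :=
    ⟨_, u, by rintro rfl; simp_all, hu, rfl⟩
  rw [sig, dif_pos hne]
  exact μ'.wf.min_mem _ hne

theorem sig_le_mLT {u : Fin m → MvPolynomial (Fin n) k} (hu : u ≠ 0) :
    μ'.ord.le (sig μ' F (vmap F u)) (mLT μ' u) := by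
  have hmem : mLT μ' u ∈ {σ : MTerm n m | ∃ w : Fin m → MvPolynomial (Fin n) k,
      w ≠ 0 ∧ vmap F w = vmap F u ∧ mLT μ' w = σ} := ⟨u, hu, rfl, rfl⟩
  rw [sig, dif_pos ⟨_, hmem⟩]
  exact (@not_lt _ μ'.ord _ _).1 (μ'.wf.not_lt_min _ hmem)

theorem sig_vmap_of_mLT_notMem_LTSyz {u : Fin m → MvPolynomial (Fin n) k} (hu : u ≠ 0)
    (hσ : mLT μ' u ∉ LTSyz μ' F) : vmap F u ≠ 0 ∧ sig μ' F (vmap F u) = mLT μ' u := by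
  have hv : vmap F u ≠ 0 := fun h => hσ ⟨u, hu, h, rfl⟩
  refine ⟨hv, @le_antisymm _ μ'.ord.toPartialOrder _ _ (sig_le_mLT μ' F hu)
    ((@not_lt _ μ'.ord _ _).1 fun hlt => hσ ?_)⟩
  obtain ⟨w, -, hwv, hwσ⟩ := exists_mLT_eq_sig μ' F (vmap_mem_idealI F u) hv
  obtain ⟨hd, hdσ⟩ := mLT_sub_smul_of_lt (w := w) hu (hwσ ▸ hlt) (1 : k)
  exact ⟨u - (1 : k) • w, hd, by rw [vmap_sub_smul, hwv, one_smul, sub_self], hdσ⟩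

theorem sig_notMem_LTSyz {f : MvPolynomial (Fin n) k} (hf : f ∈ idealI F) (hf0 : f ≠ 0) :
    sig μ' F f ∉ LTSyz μ' F := by
  rintro ⟨s, hs, hsv, hsσ⟩
  obtain ⟨u, -, huv, huσ⟩ := exists_mLT_eq_sig μ' F hf hf0
  set d := u - (mLC μ' u / mLC μ' s) • s
  have hdv : vmap F d = f := by rw [vmap_sub_smul, huv, hsv, smul_zero, sub_zero]
  have hd : d ≠ 0 := fun h => hf0 (by rw [← hdv, h, vmap_zero])
  have hlt := mLT_sub_smul_lt hs (huσ.trans hsσ.symm) hd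
  rw [huσ, ← hdv] at hlt
  exact (@not_lt _ μ'.ord _ _).2 (sig_le_mLT μ' F hd) hlt

theorem exists_sig_eq_of_notMem_LTSyz {σ : MTerm n m} (hσ : σ ∉ LTSyz μ' F) :
    ∃ f ∈ idealI F, f ≠ 0 ∧ sig μ' F f = σ := by
  have hLT : mLT μ' (Pi.single σ.2 (monomial σ.1 (1 : k))) = σ := mLT_single σ
  obtain ⟨hv, hsig⟩ := sig_vmap_of_mLT_notMem_LTSyz μ' F (by simp) (hLT ▸ hσ)
  exact ⟨_, vmap_mem_idealI F _, hv, hsig.trans hLT⟩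

theorem sig_sub_smul_of_sig_lt {f g : MvPolynomial (Fin n) k} (hf : f ∈ idealI F)
    (hf0 : f ≠ 0) (hg : g ∈ idealI F) (hg0 : g ≠ 0)
    (hlt : μ'.ord.lt (sig μ' F g) (sig μ' F f)) (c : k) :
    f - c • g ≠ 0 ∧ sig μ' F (f - c • g) = sig μ' F f := by
  obtain ⟨u, hu, huv, huσ⟩ := exists_mLT_eq_sig μ' F hf hf0
  obtain ⟨w, -, hwv, hwσ⟩ := exists_mLT_eq_sig μ' F hg hg0
  obtain ⟨hd, hdσ⟩ := mLT_sub_smul_of_lt (w := w) hu (by rwa [huσ, hwσ]) c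
  have hns := sig_notMem_LTSyz μ' F hf hf0
  rw [← huσ, ← hdσ] at hns
  obtain ⟨hv, hsig⟩ := sig_vmap_of_mLT_notMem_LTSyz μ' F hd hns
  rw [vmap_sub_smul, huv, hwv] at hv hsig
  exact ⟨hv, hsig.trans (hdσ.trans huσ)⟩

theorem exists_sig_sub_smul_lt {f g : MvPolynomial (Fin n) k} (hf : f ∈ idealI F)
    (hf0 : f ≠ 0) (hg : g ∈ idealI F) (hg0 : g ≠ 0) (hfg : sig μ' F f = sig μ' F g) :
    ∃ c : k, f - c • g ≠ 0 → μ'.ord.lt (sig μ' F (f - c • g)) (sig μ' F f) := by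
  obtain ⟨u, -, huv, huσ⟩ := exists_mLT_eq_sig μ' F hf hf0
  obtain ⟨w, hw, hwv, hwσ⟩ := exists_mLT_eq_sig μ' F hg hg0
  refine ⟨mLC μ' u / mLC μ' w, fun hv => ?_⟩
  rw [← huv, ← hwv, ← vmap_sub_smul] at hv ⊢
  have hd : u - (mLC μ' u / mLC μ' w) • w ≠ 0 := fun h => hv (by rw [h, vmap_zero])
  rw [huv, ← huσ]
  exact @lt_of_le_of_lt _ μ'.ord.toPreorder _ _ _ (sig_le_mLT μ' F hd)
    (mLT_sub_smul_lt hw (huσ.trans (hfg.trans hwσ.symm)) hd)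

end Signature

section Phi

variable [NeZero m] (μ : AdmissibleOrder n) (μ' : ModuleOrder n m)
  (F : Fin m → MvPolynomial (Fin n) k)

theorem exists_sig_eq_phi {t : Mon n} (ht : t ∈ LTIdeal μ F) :
    ∃ f ∈ idealI F, f ≠ 0 ∧ pLT μ f = t ∧ sig μ' F f = phi μ μ' F t := by
  obtain ⟨f, hf, hf0, hft⟩ := ht
  have hne : {σ : MTerm n m | ∃ f : MvPolynomial (Fin n) k,
      f ∈ idealI F ∧ f ≠ 0 ∧ pLT μ f = t ∧ sig μ' F f = σ}.Nonempty :=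
    ⟨_, f, hf, hf0, hft, rfl⟩
  rw [phi, dif_pos hne]
  exact μ'.wf.min_mem _ hne

theorem phi_le_sig {f : MvPolynomial (Fin n) k} (hf : f ∈ idealI F) (hf0 : f ≠ 0) :
    μ'.ord.le (phi μ μ' F (pLT μ f)) (sig μ' F f) := by
  have hmem : sig μ' F f ∈ {σ : MTerm n m | ∃ g : MvPolynomial (Fin n) k,
      g ∈ idealI F ∧ g ≠ 0 ∧ pLT μ g = pLT μ f ∧ sig μ' F g = σ} := ⟨f, hf, hf0, rfl, rfl⟩
  rw [phi, dif_pos ⟨_, hmem⟩]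
  exact (@not_lt _ μ'.ord _ _).1 (μ'.wf.not_lt_min _ hmem)

theorem phi_mapsTo : Set.MapsTo (phi μ μ' F) (LTIdeal μ F) {σ | σ ∉ LTSyz μ' F} := by
  intro t ht
  obtain ⟨f, hf, hf0, -, hσ⟩ := exists_sig_eq_phi μ μ' F ht
  exact hσ ▸ sig_notMem_LTSyz μ' F hf hf0

theorem phi_injOn : Set.InjOn (phi μ μ' F) (LTIdeal μ F) := by
  suffices h : ∀ t₁ ∈ LTIdeal μ F, ∀ t₂ ∈ LTIdeal μ F,
      phi μ μ' F t₁ = phi μ μ' F t₂ → ¬ μ.ord.lt t₁ t₂ by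
    intro t₁ h₁ t₂ h₂ heq
    exact @le_antisymm _ μ.ord.toPartialOrder _ _ ((@not_lt _ μ.ord _ _).1 (h t₂ h₂ t₁ h₁ heq.symm))
      ((@not_lt _ μ.ord _ _).1 (h t₁ h₁ t₂ h₂ heq))
  intro t₁ h₁ t₂ h₂ heq hlt
  obtain ⟨f₁, hf₁, hf₁0, rfl, hσ₁⟩ := exists_sig_eq_phi μ μ' F h₁
  obtain ⟨f₂, hf₂, hf₂0, rfl, hσ₂⟩ := exists_sig_eq_phi μ μ' F h₂
  obtain ⟨c, hc⟩ := exists_sig_sub_smul_lt μ' F hf₂ hf₂0 hf₁ hf₁0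
    (hσ₂.trans (heq.symm.trans hσ₁.symm))
  obtain ⟨hg0, hgLT⟩ := pLT_sub_smul_of_lt hf₂0 hlt c
  have hle := phi_le_sig μ μ' F (sub_mem hf₂ (Submodule.smul_of_tower_mem _ c hf₁)) hg0
  rw [hgLT, ← hσ₂] at hle
  exact (@not_lt _ μ'.ord _ _).2 hle (hc hg0)

theorem phi_pLT_eq_sig_of_forall_le {f₀ : MvPolynomial (Fin n) k} (hf₀ : f₀ ∈ idealI F)
    (hf₀0 : f₀ ≠ 0) (hmin : ∀ g ∈ idealI F, g ≠ 0 → sig μ' F g = sig μ' F f₀ →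
      μ.ord.le (pLT μ f₀) (pLT μ g)) :
    phi μ μ' F (pLT μ f₀) = sig μ' F f₀ := by
  obtain ⟨f', hf', hf'0, hLT, hσ'⟩ := exists_sig_eq_phi μ μ' F ⟨f₀, hf₀, hf₀0, rfl⟩
  refine @le_antisymm _ μ'.ord.toPartialOrder _ _ (phi_le_sig μ μ' F hf₀ hf₀0)
    ((@not_lt _ μ'.ord _ _).1 fun hlt => ?_)
  rw [← hσ'] at hlt
  obtain ⟨hg0, hgσ⟩ := sig_sub_smul_of_sig_lt μ' F hf₀ hf₀0 hf' hf'0 hlt (pLC μ f₀ / pLC μ f')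
  exact (@not_lt _ μ.ord _ _).2
    (hmin _ (sub_mem hf₀ (Submodule.smul_of_tower_mem _ _ hf')) hg0 hgσ)
    (pLT_sub_smul_lt hf'0 hLT.symm hg0)

theorem exists_isLeast_pLT_phi_eq {σ : MTerm n m} (hσ : σ ∉ LTSyz μ' F) :
    ∃ t₀ : Mon n,
      (∃ f : MvPolynomial (Fin n) k, f ∈ idealI F ∧ f ≠ 0 ∧ pLT μ f = t₀ ∧ sig μ' F f = σ) ∧
      (∀ t : Mon n,
        (∃ f : MvPolynomial (Fin n) k, f ∈ idealI F ∧ f ≠ 0 ∧ pLT μ f = t ∧ sig μ' F f = σ) →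
        μ.ord.le t₀ t) ∧
      phi μ μ' F t₀ = σ := by
  set T := {t : Mon n | ∃ f : MvPolynomial (Fin n) k,
    f ∈ idealI F ∧ f ≠ 0 ∧ pLT μ f = t ∧ sig μ' F f = σ}
  obtain ⟨f, hf, hf0, hσf⟩ := exists_sig_eq_of_notMem_LTSyz μ' F hσ
  have hT : T.Nonempty := ⟨_, f, hf, hf0, rfl, hσf⟩
  have hmin : ∀ t ∈ T, μ.ord.le (μ.wellFounded.min T hT) t := fun t ht =>
    (@not_lt _ μ.ord _ _).1 (μ.wellFounded.not_lt_min T ht)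
  obtain ⟨f₀, hf₀, hf₀0, hLT, hσ₀⟩ := μ.wellFounded.min_mem T hT
  refine ⟨_, ⟨f₀, hf₀, hf₀0, hLT, hσ₀⟩, hmin, ?_⟩
  rw [← hLT, ← hσ₀]
  exact phi_pLT_eq_sig_of_forall_le μ μ' F hf₀ hf₀0 fun g hg hg0 hσg =>
    hLT ▸ hmin _ ⟨g, hg, hg0, rfl, hσg.trans hσ₀⟩

end Phi

end F5

/-- `φ` is a bijection from `LT(I)` onto `NS(Syz F)`, and for `σ ∈ NS(Syz F)`
the inverse is the `μ`-minimum of `{t : ∃ f ∈ I \ {0}, LT(f) = t, S(f) = σ}`. -/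
theorem stmt_6 {k : Type*} [Field k] {n m : ℕ} [NeZero m]
    (μ : AdmissibleOrder n) (μ' : ModuleOrder n m)
    (F : Fin m → MvPolynomial (Fin n) k) :
    Set.BijOn (phi μ μ' F) (LTIdeal μ F) {σ : MTerm n m | σ ∉ LTSyz μ' F} ∧
    ∀ σ : MTerm n m, σ ∉ LTSyz μ' F →
      ∃ t₀ : Mon n,
        (∃ f : MvPolynomial (Fin n) k,
            f ∈ idealI F ∧ f ≠ 0 ∧ pLT μ f = t₀ ∧ sig μ' F f = σ) ∧
        (∀ t : Mon n,
            (∃ f : MvPolynomial (Fin n) k,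
              f ∈ idealI F ∧ f ≠ 0 ∧ pLT μ f = t ∧ sig μ' F f = σ) →
            μ.ord.le t₀ t) ∧
        phi μ μ' F t₀ = σ := by
  refine ⟨⟨phi_mapsTo μ μ' F, phi_injOn μ μ' F, fun σ hσ => ?_⟩,
    fun σ hσ => exists_isLeast_pLT_phi_eq μ μ' F hσ⟩
  obtain ⟨t₀, ⟨f, hf, hf0, hLT, -⟩, -, hφ⟩ := exists_isLeast_pLT_phi_eq μ μ' F hσ
  exact ⟨t₀, ⟨f, hf, hf0, hLT⟩, hφ⟩
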